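/- arXiv:2411.11549 — 2 statements merged into one kernel-verified Lean document; each statement's English description precedes it below -/
import Mathlib

section
/- (Correctness of the dynamic global bounds, Lemma on l_k and u_k.) Fix a finite stochastic game with partition (F, Z, S?) and value V = lfp B, and let reach_k, stay_k, l_k, u_k, dl_k, du_k be any sequences satisfying the sound-value-iteration recursion described in the context (for some admissible choice functions α_{k+1}). Then for every k ≥ 0 and every s ∈ S?: l_k ≤ V(s) ≤ u_k. -/
/-- A finite (turn-based simple) stochastic game with a partition of the state
space into Maximizer states `SBox` (the rest being Minimizer states), target
states `F`, sink states `Z`, and the remaining unknown states `S \ (F ∪ Z)`. -/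
structure SG (S A : Type) [Fintype S] [DecidableEq S] where
  /-- Maximizer states; all other states belong to Minimizer. -/
  SBox : Finset S
  /-- Target states. -/
  F : Finset S
  /-- Sink states. -/
  Z : Finset S
  hFZ : Disjoint F Z
  /-- Available actions (a nonempty finite set in each state). -/
  Av : S → Finset A
  Av_ne : ∀ s, (Av s).Nonempty
  /-- Transition probabilities. -/
  δ : S → A → S → ℝ
  δ_nonneg : ∀ s a s', 0 ≤ δ s a s'
  δ_sum : ∀ s, ∀ a ∈ Av s, ∑ s', δ s a s' = 1

namespace SG

variable {S A : Type} [Fintype S] [DecidableEq S]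

/-- The unknown states `S? = S \ (F ∪ Z)`. -/
def SUnk (G : SG S A) : Finset S := Finset.univ \ (G.F ∪ G.Z)

/-- The Bellman operator: `1` on targets, `0` on sinks, max over available actions
in Maximizer states and min over available actions in Minimizer states. -/
noncomputable def bellman (G : SG S A) (g : S → ℝ) : S → ℝ := fun s =>
  if s ∈ G.F then 1
  else if s ∈ G.Z then 0
  else if s ∈ G.SBox then (G.Av s).sup' (G.Av_ne s) fun a => ∑ s', G.δ s a s' * g s'
  else (G.Av s).inf' (G.Av_ne s) fun a => ∑ s', G.δ s a s' * g s'

/-- `V` is the value of the game: the least fixed point of the Bellman operator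
among functions `S → [0,1]`. -/
def IsValue (G : SG S A) (V : S → ℝ) : Prop :=
  (∀ s, V s ∈ Set.Icc (0 : ℝ) 1) ∧ G.bellman V = V ∧
    ∀ g : S → ℝ, (∀ s, g s ∈ Set.Icc (0 : ℝ) 1) → G.bellman g = g → ∀ s, V s ≤ g s

/-- `T` is an end component: there is a nonempty set of actions `B'` available in `T`
that stays inside `T`, and using which every state of `T` can reach every other. -/
def IsEC (G : SG S A) (T : Set S) : Prop :=
  T.Nonempty ∧ ∃ B' : Set A, B'.Nonempty ∧ (B' ⊆ ⋃ s ∈ T, (G.Av s : Set A)) ∧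
    (∀ s ∈ T, ∀ a ∈ B', a ∈ G.Av s → ∀ s', 0 < G.δ s a s' → s' ∈ T) ∧
    (∀ s ∈ T, ∀ s' ∈ T, Relation.ReflTransGen
      (fun x y => x ∈ T ∧ ∃ a ∈ B', a ∈ G.Av x ∧ 0 < G.δ x a y) s s')

end SG

namespace SG

variable {S A : Type} [Fintype S] [DecidableEq S]

open scoped Classical in
/-- Decision value of a Maximizer state `s` with chosen action `α` (w.r.t. one-step
values `reach`, `stay`): the maximum, over actions `β` with
`Δstay(α,β) = ∑(δ(s,α)−δ(s,β))·stay > 0`, of `Δreach(β,α)/Δstay(α,β)`;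
defaulting to `0` when no `β` qualifies. -/
noncomputable def dvalBox (G : SG S A) (reach stay : S → ℝ) (s : S) (α : A) : ℝ :=
  let Q := (G.Av s).filter fun β => 0 < ∑ s', (G.δ s α s' - G.δ s β s') * stay s'
  if h : Q.Nonempty then
    Q.sup' h fun β => (∑ s', (G.δ s β s' - G.δ s α s') * reach s') /
      (∑ s', (G.δ s α s' - G.δ s β s') * stay s')
  else 0

open scoped Classical in
/-- Decision value of a Minimizer state `s` with chosen action `α`: the minimum, over
actions `β` with `Δstay(α,β) > 0`, of `Δreach(β,α)/Δstay(α,β)`; defaulting to `1`. -/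
noncomputable def dvalCirc (G : SG S A) (reach stay : S → ℝ) (s : S) (α : A) : ℝ :=
  let Q := (G.Av s).filter fun β => 0 < ∑ s', (G.δ s α s' - G.δ s β s') * stay s'
  if h : Q.Nonempty then
    Q.inf' h fun β => (∑ s', (G.δ s β s' - G.δ s α s') * reach s') /
      (∑ s', (G.δ s α s' - G.δ s β s') * stay s')
  else 1

open scoped Classical in
/-- The sound-value-iteration recursion for stochastic games: step-bounded
probabilities `reach_k`, `stay_k` under `k`-step optimal action choices `α`,
dynamic global bounds `l_k ≤ u_k` and decision values `dl_k`, `du_k`. -/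
def SVIRec (G : SG S A) (hne : G.SUnk.Nonempty)
    (reach stay : ℕ → S → ℝ) (α : ℕ → S → A) (l u dl du : ℕ → ℝ) : Prop :=
  (∀ k, ∀ s ∈ G.F, reach k s = 1 ∧ stay k s = 0) ∧
  (∀ k, ∀ s ∈ G.Z, reach k s = 0 ∧ stay k s = 0) ∧
  (∀ s ∈ G.SUnk, reach 0 s = 0 ∧ stay 0 s = 1) ∧
  l 0 = 0 ∧ u 0 = 1 ∧ du 0 = 0 ∧ dl 0 = 1 ∧
  (∀ k, ∀ s ∈ G.SUnk, α (k + 1) s ∈ G.Av s) ∧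
  (∀ k, ∀ s ∈ G.SUnk, s ∈ G.SBox → ∀ a ∈ G.Av s,
      ∑ s', G.δ s a s' * (reach k s' + stay k s' * u k) ≤
        ∑ s', G.δ s (α (k + 1) s) s' * (reach k s' + stay k s' * u k)) ∧
  (∀ k, ∀ s ∈ G.SUnk, s ∉ G.SBox → ∀ a ∈ G.Av s,
      ∑ s', G.δ s (α (k + 1) s) s' * (reach k s' + stay k s' * l k) ≤
        ∑ s', G.δ s a s' * (reach k s' + stay k s' * l k)) ∧
  (∀ k, ∀ s ∈ G.SUnk, reach (k + 1) s = ∑ s', G.δ s (α (k + 1) s) s' * reach k s') ∧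
  (∀ k, ∀ s ∈ G.SUnk, stay (k + 1) s = ∑ s', G.δ s (α (k + 1) s) s' * stay k s') ∧
  (∀ k, du (k + 1) = if h : (G.SUnk ∩ G.SBox).Nonempty
      then max (du k)
        ((G.SUnk ∩ G.SBox).sup' h fun s => G.dvalBox (reach k) (stay k) s (α (k + 1) s))
      else du k) ∧
  (∀ k, dl (k + 1) = if h : (G.SUnk \ G.SBox).Nonempty
      then min (dl k)
        ((G.SUnk \ G.SBox).inf' h fun s => G.dvalCirc (reach k) (stay k) s (α (k + 1) s))
      else dl k) ∧
  (∀ k, u (k + 1) = if ∀ s ∈ G.SUnk, stay (k + 1) s < 1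
      then min (u k) (max (du (k + 1))
        (G.SUnk.sup' hne fun s => reach (k + 1) s / (1 - stay (k + 1) s)))
      else u k) ∧
  (∀ k, l (k + 1) = if ∀ s ∈ G.SUnk, stay (k + 1) s < 1
      then max (l k) (min (dl (k + 1))
        (G.SUnk.inf' hne fun s => reach (k + 1) s / (1 - stay (k + 1) s)))
      else l k)

end SG

/-!
Upper bound (the lower one is symmetric). Let `C = max_{S?} V`, attained at `s`. If
`C ≤ du_{k+1}` there is nothing to prove. Otherwise every decision value seen so far is below
`C ≤ u_m`, so an action that is greedy for `reach_m + stay_m · u_m` remains greedy for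
`reach_m + stay_m · C`; by induction on `m` this gives `V ≤ reach_m + stay_m · C` everywhere.
At `s` this reads `C ≤ reach_{k+1}(s) + stay_{k+1}(s) · C`, i.e. `C ≤ reach/(1 - stay)`.
-/

open Finset Function

section DecisionValue

variable {ι : Type*} [Fintype ι]

lemma sum_mul_add_mul_sub_sum_mul_add_mul (p q r st : ι → ℝ) (z : ℝ) :
    ∑ i, p i * (r i + st i * z) - ∑ i, q i * (r i + st i * z)
      = (∑ i, (p i - q i) * st i) * z - ∑ i, (q i - p i) * r i := by
  simp only [sub_mul, mul_add, sum_sub_distrib, sum_add_distrib, sum_mul, mul_assoc]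
  ring

/-- The difference of the two sides is affine in the guess and changes sign only at the
decision value. -/
lemma sum_mul_add_mul_le_of_decision_le {p q r st : ι → ℝ} {x y : ℝ} (hxy : x ≤ y)
    (hy : ∑ i, q i * (r i + st i * y) ≤ ∑ i, p i * (r i + st i * y))
    (hdec : 0 < ∑ i, (p i - q i) * st i →
      (∑ i, (q i - p i) * r i) / (∑ i, (p i - q i) * st i) ≤ x) :
    ∑ i, q i * (r i + st i * x) ≤ ∑ i, p i * (r i + st i * x) := by
  have hy' := sum_mul_add_mul_sub_sum_mul_add_mul p q r st y
  have hx' := sum_mul_add_mul_sub_sum_mul_add_mul p q r st x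
  rcases le_or_gt (∑ i, (p i - q i) * st i) 0 with hD | hD
  · nlinarith
  · have := (div_le_iff₀ hD).1 (hdec hD)
    linarith

lemma sum_mul_add_mul_le_of_le_decision {p q r st : ι → ℝ} {x y : ℝ} (hyx : y ≤ x)
    (hy : ∑ i, p i * (r i + st i * y) ≤ ∑ i, q i * (r i + st i * y))
    (hdec : 0 < ∑ i, (p i - q i) * st i →
      x ≤ (∑ i, (q i - p i) * r i) / (∑ i, (p i - q i) * st i)) :
    ∑ i, p i * (r i + st i * x) ≤ ∑ i, q i * (r i + st i * x) := by
  have hy' := sum_mul_add_mul_sub_sum_mul_add_mul p q r st y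
  have hx' := sum_mul_add_mul_sub_sum_mul_add_mul p q r st x
  rcases le_or_gt (∑ i, (p i - q i) * st i) 0 with hD | hD
  · nlinarith
  · have := (le_div_iff₀ hD).1 (hdec hD)
    linarith

end DecisionValue

namespace SG

variable {S A : Type} [Fintype S] [DecidableEq S] {G : SG S A}

lemma div_le_dvalBox {r st : S → ℝ} {s : S} {a b : A} (hb : b ∈ G.Av s)
    (hpos : 0 < ∑ t, (G.δ s a t - G.δ s b t) * st t) :
    (∑ t, (G.δ s b t - G.δ s a t) * r t) / (∑ t, (G.δ s a t - G.δ s b t) * st t) ≤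
      G.dvalBox r st s a := by
  classical
  have hbQ : b ∈ (G.Av s).filter
      fun β => 0 < ∑ t, (G.δ s a t - G.δ s β t) * st t := mem_filter.2 ⟨hb, hpos⟩
  rw [dvalBox, dif_pos ⟨b, hbQ⟩]
  exact le_sup' (fun β => (∑ t, (G.δ s β t - G.δ s a t) * r t) /
    ∑ t, (G.δ s a t - G.δ s β t) * st t) hbQ

lemma dvalCirc_le_div {r st : S → ℝ} {s : S} {a b : A} (hb : b ∈ G.Av s)
    (hpos : 0 < ∑ t, (G.δ s a t - G.δ s b t) * st t) :
    G.dvalCirc r st s a ≤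
      (∑ t, (G.δ s b t - G.δ s a t) * r t) / (∑ t, (G.δ s a t - G.δ s b t) * st t) := by
  classical
  have hbQ : b ∈ (G.Av s).filter
      fun β => 0 < ∑ t, (G.δ s a t - G.δ s β t) * st t := mem_filter.2 ⟨hb, hpos⟩
  rw [dvalCirc, dif_pos ⟨b, hbQ⟩]
  exact inf'_le (fun β => (∑ t, (G.δ s β t - G.δ s a t) * r t) /
    ∑ t, (G.δ s a t - G.δ s β t) * st t) hbQ

lemma mem_SUnk {t : S} : t ∈ G.SUnk ↔ t ∉ G.F ∧ t ∉ G.Z := by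
  simp [SUnk]

lemma sum_δ_mul_le_sum_δ_mul {t : S} {a : A} {f g : S → ℝ} (hfg : ∀ s, f s ≤ g s) :
    ∑ s, G.δ t a s * f s ≤ ∑ s, G.δ t a s * g s :=
  sum_le_sum fun s _ => mul_le_mul_of_nonneg_left (hfg s) (G.δ_nonneg t a s)

section FixedPoint

variable {g : S → ℝ} {t : S}

lemma fixedPt_eq_one_of_mem_F (hg : IsFixedPt G.bellman g) (ht : t ∈ G.F) : g t = 1 := by
  rw [← hg, bellman, if_pos ht]

lemma fixedPt_eq_zero_of_mem_Z (hg : IsFixedPt G.bellman g) (ht : t ∈ G.Z) : g t = 0 := by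
  rw [← hg, bellman, if_neg (disjoint_right.1 G.hFZ ht), if_pos ht]

lemma fixedPt_eq_sup'_of_mem_SBox (hg : IsFixedPt G.bellman g) (ht : t ∈ G.SUnk)
    (htB : t ∈ G.SBox) :
    g t = (G.Av t).sup' (G.Av_ne t) fun a => ∑ s, G.δ t a s * g s := by
  obtain ⟨htF, htZ⟩ := mem_SUnk.1 ht
  conv_lhs => rw [← hg, bellman, if_neg htF, if_neg htZ, if_pos htB]

lemma fixedPt_eq_inf'_of_notMem_SBox (hg : IsFixedPt G.bellman g) (ht : t ∈ G.SUnk)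
    (htB : t ∉ G.SBox) :
    g t = (G.Av t).inf' (G.Av_ne t) fun a => ∑ s, G.δ t a s * g s := by
  obtain ⟨htF, htZ⟩ := mem_SUnk.1 ht
  conv_lhs => rw [← hg, bellman, if_neg htF, if_neg htZ, if_neg htB]

end FixedPoint

end SG

namespace SG.SVIRec

variable {S A : Type} [Fintype S] [DecidableEq S] {G : SG S A} {hne : G.SUnk.Nonempty}
  {reach stay : ℕ → S → ℝ} {α : ℕ → S → A} {l u dl du : ℕ → ℝ} {V : S → ℝ}

lemma u_antitone (h : G.SVIRec hne reach stay α l u dl du) : Antitone u := by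
  obtain ⟨-, -, -, -, -, -, -, -, -, -, -, -, -, -, hu, -⟩ := h
  refine antitone_nat_of_succ_le fun k => ?_
  rw [hu k]
  split_ifs
  exacts [min_le_left _ _, le_rfl]

lemma l_monotone (h : G.SVIRec hne reach stay α l u dl du) : Monotone l := by
  obtain ⟨-, -, -, -, -, -, -, -, -, -, -, -, -, -, -, hl⟩ := h
  refine monotone_nat_of_le_succ fun k => ?_
  rw [hl k]
  split_ifs
  exacts [le_max_left _ _, le_rfl]

lemma du_monotone (h : G.SVIRec hne reach stay α l u dl du) : Monotone du := by
  obtain ⟨-, -, -, -, -, -, -, -, -, -, -, -, hdu, -⟩ := h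
  refine monotone_nat_of_le_succ fun k => ?_
  rw [hdu k]
  split_ifs
  exacts [le_max_left _ _, le_rfl]

lemma dl_antitone (h : G.SVIRec hne reach stay α l u dl du) : Antitone dl := by
  obtain ⟨-, -, -, -, -, -, -, -, -, -, -, -, -, hdl, -⟩ := h
  refine antitone_nat_of_succ_le fun k => ?_
  rw [hdl k]
  split_ifs
  exacts [min_le_left _ _, le_rfl]

lemma dvalBox_le_du (h : G.SVIRec hne reach stay α l u dl du) {k : ℕ} {t : S}
    (ht : t ∈ G.SUnk) (htB : t ∈ G.SBox) :
    G.dvalBox (reach k) (stay k) t (α (k + 1) t) ≤ du (k + 1) := by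
  obtain ⟨-, -, -, -, -, -, -, -, -, -, -, -, hdu, -⟩ := h
  have htQ : t ∈ G.SUnk ∩ G.SBox := mem_inter.2 ⟨ht, htB⟩
  rw [hdu k, dif_pos ⟨t, htQ⟩]
  exact le_max_of_le_right
    (le_sup' (fun t => G.dvalBox (reach k) (stay k) t (α (k + 1) t)) htQ)

lemma dl_le_dvalCirc (h : G.SVIRec hne reach stay α l u dl du) {k : ℕ} {t : S}
    (ht : t ∈ G.SUnk) (htB : t ∉ G.SBox) :
    dl (k + 1) ≤ G.dvalCirc (reach k) (stay k) t (α (k + 1) t) := by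
  obtain ⟨-, -, -, -, -, -, -, -, -, -, -, -, -, hdl, -⟩ := h
  have htQ : t ∈ G.SUnk \ G.SBox := mem_sdiff.2 ⟨ht, htB⟩
  rw [hdl k, dif_pos ⟨t, htQ⟩]
  exact min_le_of_right_le
    (inf'_le (fun t => G.dvalCirc (reach k) (stay k) t (α (k + 1) t)) htQ)

lemma reach_add_stay_mul_zero (h : G.SVIRec hne reach stay α l u dl du) {t : S}
    (ht : t ∈ G.SUnk) (x : ℝ) : reach 0 t + stay 0 t * x = x := by
  obtain ⟨-, -, h0, -⟩ := h
  rw [(h0 t ht).1, (h0 t ht).2, zero_add, one_mul]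

lemma reach_add_stay_mul_succ (h : G.SVIRec hne reach stay α l u dl du) {k : ℕ} {t : S}
    (ht : t ∈ G.SUnk) (x : ℝ) :
    reach (k + 1) t + stay (k + 1) t * x =
      ∑ s, G.δ t (α (k + 1) t) s * (reach k s + stay k s * x) := by
  obtain ⟨-, -, -, -, -, -, -, -, -, -, hreach, hstay, -⟩ := h
  simp only [hreach k t ht, hstay k t ht, mul_add, sum_add_distrib, sum_mul, mul_assoc]

lemma reach_add_stay_mul_of_notMem_SUnk (h : G.SVIRec hne reach stay α l u dl du)
    {g : S → ℝ} (hg : IsFixedPt G.bellman g) {k : ℕ} {t : S} (ht : t ∉ G.SUnk) (x : ℝ) :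
    reach k t + stay k t * x = g t := by
  obtain ⟨hF, hZ, -⟩ := h
  by_cases htF : t ∈ G.F
  · rw [(hF k t htF).1, (hF k t htF).2, fixedPt_eq_one_of_mem_F hg htF]
    ring
  · have htZ : t ∈ G.Z := by simpa [mem_SUnk, htF] using ht
    rw [(hZ k t htZ).1, (hZ k t htZ).2, fixedPt_eq_zero_of_mem_Z hg htZ]
    ring

lemma le_reach_add_stay_mul_succ (h : G.SVIRec hne reach stay α l u dl du)
    (hV : IsFixedPt G.bellman V) {k : ℕ} {C : ℝ} (hCu : C ≤ u k) (hduC : du (k + 1) ≤ C)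
    (hk : ∀ t, V t ≤ reach k t + stay k t * C) (t : S) :
    V t ≤ reach (k + 1) t + stay (k + 1) t * C := by
  by_cases ht : t ∈ G.SUnk
  swap
  · rw [h.reach_add_stay_mul_of_notMem_SUnk hV ht]
  rw [h.reach_add_stay_mul_succ ht]
  have hdu := h.dvalBox_le_du (k := k) ht
  obtain ⟨-, -, -, -, -, -, -, hαAv, hgreedy, -⟩ := h
  by_cases htB : t ∈ G.SBox
  · obtain ⟨a, ha, hVa⟩ := exists_mem_eq_sup' (G.Av_ne t) fun a => ∑ s, G.δ t a s * V s
    calc V t = ∑ s, G.δ t a s * V s := (fixedPt_eq_sup'_of_mem_SBox hV ht htB).trans hVa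
      _ ≤ ∑ s, G.δ t a s * (reach k s + stay k s * C) := sum_δ_mul_le_sum_δ_mul hk
      _ ≤ _ := sum_mul_add_mul_le_of_decision_le hCu (hgreedy k t ht htB a ha) fun hpos =>
          ((div_le_dvalBox ha hpos).trans (hdu htB)).trans hduC
  · calc V t ≤ ∑ s, G.δ t (α (k + 1) t) s * V s := by
          rw [fixedPt_eq_inf'_of_notMem_SBox hV ht htB]
          exact inf'_le _ (hαAv k t ht)
      _ ≤ _ := sum_δ_mul_le_sum_δ_mul hk

lemma reach_add_stay_mul_succ_le (h : G.SVIRec hne reach stay α l u dl du)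
    (hV : IsFixedPt G.bellman V) {k : ℕ} {c : ℝ} (hlc : l k ≤ c) (hdlc : c ≤ dl (k + 1))
    (hk : ∀ t, reach k t + stay k t * c ≤ V t) (t : S) :
    reach (k + 1) t + stay (k + 1) t * c ≤ V t := by
  by_cases ht : t ∈ G.SUnk
  swap
  · rw [h.reach_add_stay_mul_of_notMem_SUnk hV ht]
  rw [h.reach_add_stay_mul_succ ht]
  have hdl := h.dl_le_dvalCirc (k := k) ht
  obtain ⟨-, -, -, -, -, -, -, hαAv, -, hgreedy, -⟩ := h
  by_cases htB : t ∈ G.SBox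
  · calc _ ≤ ∑ s, G.δ t (α (k + 1) t) s * V s := sum_δ_mul_le_sum_δ_mul hk
      _ ≤ V t := by
          rw [fixedPt_eq_sup'_of_mem_SBox hV ht htB]
          exact le_sup' (fun a => ∑ s, G.δ t a s * V s) (hαAv k t ht)
  · obtain ⟨a, ha, hVa⟩ := exists_mem_eq_inf' (G.Av_ne t) fun a => ∑ s, G.δ t a s * V s
    calc _ ≤ ∑ s, G.δ t a s * (reach k s + stay k s * c) :=
          sum_mul_add_mul_le_of_le_decision hlc (hgreedy k t ht htB a ha) fun hpos =>
            hdlc.trans ((hdl htB).trans (dvalCirc_le_div ha hpos))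
      _ ≤ ∑ s, G.δ t a s * V s := sum_δ_mul_le_sum_δ_mul hk
      _ = V t := ((fixedPt_eq_inf'_of_notMem_SBox hV ht htB).trans hVa).symm

lemma le_reach_add_stay_mul (h : G.SVIRec hne reach stay α l u dl du)
    (hV : IsFixedPt G.bellman V) {k : ℕ} {C : ℝ} (hVC : ∀ t ∈ G.SUnk, V t ≤ C)
    (hCu : C ≤ u k) (hduC : du (k + 1) ≤ C) :
    ∀ m ≤ k + 1, ∀ t, V t ≤ reach m t + stay m t * C := by
  intro m hm
  induction m with
  | zero =>
    intro t
    by_cases ht : t ∈ G.SUnk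
    · rw [h.reach_add_stay_mul_zero ht]
      exact hVC t ht
    · rw [h.reach_add_stay_mul_of_notMem_SUnk hV ht]
  | succ m ih =>
    exact h.le_reach_add_stay_mul_succ hV (hCu.trans (h.u_antitone (by omega)))
      ((h.du_monotone (by omega)).trans hduC) (ih (by omega))

lemma reach_add_stay_mul_le (h : G.SVIRec hne reach stay α l u dl du)
    (hV : IsFixedPt G.bellman V) {k : ℕ} {c : ℝ} (hcV : ∀ t ∈ G.SUnk, c ≤ V t)
    (hlc : l k ≤ c) (hdlc : c ≤ dl (k + 1)) :
    ∀ m ≤ k + 1, ∀ t, reach m t + stay m t * c ≤ V t := by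
  intro m hm
  induction m with
  | zero =>
    intro t
    by_cases ht : t ∈ G.SUnk
    · rw [h.reach_add_stay_mul_zero ht]
      exact hcV t ht
    · rw [h.reach_add_stay_mul_of_notMem_SUnk hV ht]
  | succ m ih =>
    exact h.reach_add_stay_mul_succ_le hV ((h.l_monotone (by omega)).trans hlc)
      (hdlc.trans (h.dl_antitone (by omega))) (ih (by omega))

lemma le_u_succ (h : G.SVIRec hne reach stay α l u dl du) (hV : IsFixedPt G.bellman V)
    {k : ℕ} (hk : ∀ t ∈ G.SUnk, V t ≤ u k) : ∀ s ∈ G.SUnk, V s ≤ u (k + 1) := by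
  intro s hs
  obtain ⟨sM, hsM, hmax⟩ := exists_max_image G.SUnk V hne
  have hV_le := h.le_reach_add_stay_mul hV hmax (hk sM hsM)
  obtain ⟨-, -, -, -, -, -, -, -, -, -, -, -, -, -, hu, -⟩ := h
  rw [hu k]
  split_ifs with hstay
  swap
  · exact hk s hs
  refine le_min (hk s hs) ((hmax s hs).trans ?_)
  rcases le_or_gt (V sM) (du (k + 1)) with hdu | hdu
  · exact hdu.trans (le_max_left _ _)
  have hfix := hV_le hdu.le (k + 1) le_rfl sM
  have hV_le_div : V sM ≤ reach (k + 1) sM / (1 - stay (k + 1) sM) := by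
    rw [le_div_iff₀ (sub_pos.2 (hstay sM hsM))]
    linarith
  exact hV_le_div.trans ((le_sup' (fun t => reach (k + 1) t / (1 - stay (k + 1) t)) hsM).trans
    (le_max_right _ _))

lemma l_succ_le (h : G.SVIRec hne reach stay α l u dl du) (hV : IsFixedPt G.bellman V)
    {k : ℕ} (hk : ∀ t ∈ G.SUnk, l k ≤ V t) : ∀ s ∈ G.SUnk, l (k + 1) ≤ V s := by
  intro s hs
  obtain ⟨sm, hsm, hmin⟩ := exists_min_image G.SUnk V hne
  have hV_ge := h.reach_add_stay_mul_le hV hmin (hk sm hsm)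
  obtain ⟨-, -, -, -, -, -, -, -, -, -, -, -, -, -, -, hl⟩ := h
  rw [hl k]
  split_ifs with hstay
  swap
  · exact hk s hs
  refine max_le (hk s hs) (le_trans ?_ (hmin s hs))
  rcases le_or_gt (dl (k + 1)) (V sm) with hdl | hdl
  · exact (min_le_left _ _).trans hdl
  have hfix := hV_ge hdl.le (k + 1) le_rfl sm
  have hdiv_le_V : reach (k + 1) sm / (1 - stay (k + 1) sm) ≤ V sm := by
    rw [div_le_iff₀ (sub_pos.2 (hstay sm hsm))]
    linarith
  exact (min_le_right _ _).trans
    ((inf'_le (fun t => reach (k + 1) t / (1 - stay (k + 1) t)) hsm).trans hdiv_le_V)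

end SG.SVIRec

/-- Correctness of the dynamic global bounds: along any run of the
sound-value-iteration recursion, `l_k ≤ V(s) ≤ u_k` for every `k` and `s ∈ S?`. -/
theorem svi_global_bounds_correct {S A : Type} [Fintype S] [DecidableEq S]
    (G : SG S A) (V : S → ℝ) (hV : G.IsValue V)
    (hne : G.SUnk.Nonempty)
    (reach stay : ℕ → S → ℝ) (α : ℕ → S → A) (l u dl du : ℕ → ℝ)
    (hrec : G.SVIRec hne reach stay α l u dl du) :
    ∀ k, ∀ s ∈ G.SUnk, l k ≤ V s ∧ V s ≤ u k := by
  obtain ⟨hV01, hVfix, -⟩ := hV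
  intro k
  induction k with
  | zero =>
    obtain ⟨-, -, -, hl0, hu0, -⟩ := hrec
    intro s _
    rw [hl0, hu0]
    exact hV01 s
  | succ k ih =>
    intro s hs
    exact ⟨hrec.l_succ_le hVfix (fun t ht => (ih t ht).1) s hs,
      hrec.le_u_succ hVfix (fun t ht => (ih t ht).2) s hs⟩
end

section
/- (Best exit with respect to an over-approximation dominates the end component, Lemma B.1.) Fix a finite stochastic game with partition (F, Z, S?) and value V = lfp B. Let Y ⊆ S? be an end component having at least one Maximizer exit, and let f : S → [0,1] satisfy f(s) ≥ V(s) for all s ∈ S. Let (s_f, a_f) be a Maximizer best exit of Y according to f. Then for every s ∈ Y: V(s) ≤ ∑_{t} δ(s_f, a_f, t)·f(t). -/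
/-
An end component gives Minimizer a way to keep the play inside `Y` forever, so from `Y` the
Maximizer can only collect value by leaving `Y` through one of his exits, and each exit is worth
at most what `f ≥ V` promises for it, hence at most `c := f(s_f, a_f)`. Formally, truncating
`V` at `c` on `Y` yields a pre-fixed point of the Bellman operator, and by Knaster–Tarski the
least fixed point `V` lies below every pre-fixed point.
-/

namespace SG

variable {S A : Type} [Fintype S] [DecidableEq S] (G : SG S A)

theorem sum_δ_mul_mono {g h : S → ℝ} (hgh : g ≤ h) (s : S) (a : A) :
    ∑ t, G.δ s a t * g t ≤ ∑ t, G.δ s a t * h t :=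
  Finset.sum_le_sum fun t _ => mul_le_mul_of_nonneg_left (hgh t) (G.δ_nonneg s a t)

theorem sum_δ_mul_nonneg {g : S → ℝ} (hg : 0 ≤ g) (s : S) (a : A) :
    0 ≤ ∑ t, G.δ s a t * g t :=
  Finset.sum_nonneg fun t _ => mul_nonneg (G.δ_nonneg s a t) (hg t)

theorem sum_δ_mul_le_of_forall_post_le {g : S → ℝ} {c : ℝ} {s : S} {a : A} (ha : a ∈ G.Av s)
    (hg : ∀ t, 0 < G.δ s a t → g t ≤ c) : ∑ t, G.δ s a t * g t ≤ c :=
  calc ∑ t, G.δ s a t * g t ≤ ∑ t, G.δ s a t * c := by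
        refine Finset.sum_le_sum fun t _ => ?_
        rcases (G.δ_nonneg s a t).eq_or_lt with h0 | hpos
        · simp [← h0]
        · exact mul_le_mul_of_nonneg_left (hg t hpos) hpos.le
    _ = c := by rw [← Finset.sum_mul, G.δ_sum s a ha, one_mul]

theorem bellman_mono : Monotone G.bellman := fun g h hgh s => by
  unfold bellman
  split_ifs
  · exact le_rfl
  · exact le_rfl
  · exact Finset.sup'_mono_fun fun a _ => G.sum_δ_mul_mono hgh s a
  · exact Finset.inf'_mono_fun fun a _ => G.sum_δ_mul_mono hgh s a

theorem bellman_mem_Icc {g : S → ℝ} (hg : ∀ s, g s ∈ Set.Icc (0 : ℝ) 1) (s : S) :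
    G.bellman g s ∈ Set.Icc (0 : ℝ) 1 := by
  have hact : ∀ a ∈ G.Av s, ∑ t, G.δ s a t * g t ∈ Set.Icc (0 : ℝ) 1 := fun a ha =>
    ⟨G.sum_δ_mul_nonneg (fun t => (hg t).1) s a,
      G.sum_δ_mul_le_of_forall_post_le ha fun t _ => (hg t).2⟩
  obtain ⟨a₀, ha₀⟩ := G.Av_ne s
  unfold bellman
  split_ifs
  · exact ⟨zero_le_one, le_rfl⟩
  · exact ⟨le_rfl, zero_le_one⟩
  · exact ⟨(hact a₀ ha₀).1.trans (Finset.le_sup' (fun a => ∑ t, G.δ s a t * g t) ha₀),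
      Finset.sup'_le _ _ fun a ha => (hact a ha).2⟩
  · exact ⟨Finset.le_inf' _ _ fun a ha => (hact a ha).1,
      (Finset.inf'_le _ ha₀).trans (hact a₀ ha₀).2⟩

variable {G}

/-- Knaster–Tarski, applied to the Bellman operator on the complete lattice `S → [0,1]`. -/
theorem IsValue.le_of_bellman_le {V g : S → ℝ} (hV : G.IsValue V)
    (hg : ∀ s, g s ∈ Set.Icc (0 : ℝ) 1) (hBg : G.bellman g ≤ g) : V ≤ g := by
  have : Fact ((0 : ℝ) ≤ 1) := ⟨zero_le_one⟩
  let Φ : (S → Set.Icc (0 : ℝ) 1) →o (S → Set.Icc (0 : ℝ) 1) :=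
    { toFun := fun h s => ⟨G.bellman (fun t => h t) s, G.bellman_mem_Icc (fun t => (h t).2) s⟩
      monotone' := fun h₁ h₂ h₁₂ s => G.bellman_mono (fun t => h₁₂ t) s }
  let m : S → ℝ := fun s => Φ.lfp s
  have hm_fixed : G.bellman m = m := funext fun s => congrArg Subtype.val (congrFun Φ.map_lfp s)
  have hm_le : Φ.lfp ≤ fun s => ⟨g s, hg s⟩ := Φ.lfp_le fun s => hBg s
  exact fun s => (hV.2.2 m (fun s => (Φ.lfp s).2) hm_fixed s).trans (hm_le s)

theorem IsEC.exists_mem_Av_post_subset {T : Set S} (hT : G.IsEC T) {s : S} (hs : s ∈ T) :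
    ∃ a ∈ G.Av s, ∀ t, 0 < G.δ s a t → t ∈ T := by
  obtain ⟨-, B', ⟨b, hb⟩, hB'Av, hB'stay, hconn⟩ := hT
  suffices ∃ a ∈ B', a ∈ G.Av s from
    let ⟨a, haB', ha⟩ := this
    ⟨a, ha, hB'stay s hs a haB' ha⟩
  obtain ⟨s₀, hs₀, hb₀⟩ := Set.mem_iUnion₂.mp (hB'Av hb)
  rcases (hconn s hs s₀ hs₀).cases_head with rfl | ⟨_, ⟨-, a, haB', ha, -⟩, -⟩
  · exact ⟨b, hb, hb₀⟩
  · exact ⟨a, haB', ha⟩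

theorem IsEC.bellman_le {Y : Set S} (hY : G.IsEC Y) (hYunk : Y ⊆ ↑G.SUnk)
    {g : S → ℝ} {c : ℝ} (hgY : ∀ s ∈ Y, g s ≤ c)
    (hexit : ∀ s ∈ Y, s ∈ G.SBox → ∀ a ∈ G.Av s, (∃ t, 0 < G.δ s a t ∧ t ∉ Y) →
      ∑ t, G.δ s a t * g t ≤ c) {s : S} (hs : s ∈ Y) : G.bellman g s ≤ c := by
  have hstay : ∀ a ∈ G.Av s, (∀ t, 0 < G.δ s a t → t ∈ Y) → ∑ t, G.δ s a t * g t ≤ c :=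
    fun a ha hpost => G.sum_δ_mul_le_of_forall_post_le ha fun t ht => hgY t (hpost t ht)
  have hsF_Z : s ∉ G.F ∪ G.Z := (Finset.mem_sdiff.mp (hYunk hs)).2
  rw [Finset.mem_union, not_or] at hsF_Z
  unfold bellman
  rw [if_neg hsF_Z.1, if_neg hsF_Z.2]
  split_ifs with hbox
  · refine Finset.sup'_le _ _ fun a ha => ?_
    by_cases hleaves : ∃ t, 0 < G.δ s a t ∧ t ∉ Y
    · exact hexit s hs hbox a ha hleaves
    · push Not at hleaves
      exact hstay a ha hleaves
  · obtain ⟨a, ha, hpost⟩ := hY.exists_mem_Av_post_subset hs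
    exact (Finset.inf'_le _ ha).trans (hstay a ha hpost)

theorem IsValue.le_of_bellman_le_on {V : S → ℝ} (hV : G.IsValue V) {Y : Set S} {c : ℝ}
    (hc : 0 ≤ c)
    (hstep : ∀ g ≤ V, (∀ s ∈ Y, g s ≤ c) → ∀ s ∈ Y, G.bellman g s ≤ c) :
    ∀ s ∈ Y, V s ≤ c := by
  classical
  let g : S → ℝ := fun s => if s ∈ Y then min (V s) c else V s
  have hgV : g ≤ V := fun s => by dsimp only [g]; split_ifs <;> simp
  have hgY : ∀ s ∈ Y, g s = min (V s) c := fun s hs => if_pos hs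
  have hg01 : ∀ s, g s ∈ Set.Icc (0 : ℝ) 1 := fun s =>
    ⟨by dsimp only [g]; split_ifs <;> simp [(hV.1 s).1, hc], (hgV s).trans (hV.1 s).2⟩
  have hBgV : G.bellman g ≤ V := fun s => hV.2.1 ▸ G.bellman_mono hgV s
  have hBg : G.bellman g ≤ g := fun s => by
    by_cases hs : s ∈ Y
    · rw [hgY s hs]
      exact le_min (hBgV s) (hstep g hgV (fun t ht => hgY t ht ▸ min_le_right _ _) s hs)
    · simpa [g, hs] using hBgV s
  intro s hs
  exact (hV.le_of_bellman_le hg01 hBg s).trans (hgY s hs ▸ min_le_right _ _)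

end SG

theorem svi_best_exit_dominates_general {S A : Type} [Fintype S] [DecidableEq S]
    (G : SG S A) (V : S → ℝ) (hV : G.IsValue V)
    (Y : Set S) (hYsub : Y ⊆ (↑G.SUnk : Set S)) (hEC : G.IsEC Y)
    (f : S → ℝ) (hfV : ∀ s, V s ≤ f s)
    (sf : S) (af : A)
    (hbest : ∀ s ∈ Y, s ∈ G.SBox → ∀ a ∈ G.Av s, (∃ t, 0 < G.δ s a t ∧ t ∉ Y) →
      ∑ t, G.δ s a t * f t ≤ ∑ t, G.δ sf af t * f t) :
    ∀ s ∈ Y, V s ≤ ∑ t, G.δ sf af t * f t := by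
  have hf_nonneg : 0 ≤ f := fun s => (hV.1 s).1.trans (hfV s)
  refine hV.le_of_bellman_le_on (G.sum_δ_mul_nonneg hf_nonneg sf af) fun g hgV hgY s hs => ?_
  refine hEC.bellman_le hYsub hgY (fun s hs hbox a ha hleaves => ?_) hs
  exact (G.sum_δ_mul_mono (hgV.trans hfV) s a).trans (hbest s hs hbox a ha hleaves)

/-- Best exit with respect to an over-approximation dominates the end component
(Lem. B.1): if `Y ⊆ S?` is an end component with a Maximizer exit, `f : S → [0,1]`
over-approximates the value `V`, and `(s_f, a_f)` is a Maximizer best exit of `Y`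
according to `f`, then for every `s ∈ Y`, `V(s) ≤ ∑_t δ(s_f,a_f,t)·f(t)`. -/
theorem svi_best_exit_dominates {S A : Type} [Fintype S] [DecidableEq S]
    (G : SG S A) (V : S → ℝ) (hV : G.IsValue V)
    (Y : Set S) (hYsub : Y ⊆ (↑G.SUnk : Set S)) (hEC : G.IsEC Y)
    (f : S → ℝ) (hf01 : ∀ s, f s ∈ Set.Icc (0 : ℝ) 1) (hfV : ∀ s, V s ≤ f s)
    (sf : S) (af : A)
    (hsfY : sf ∈ Y) (hsfBox : sf ∈ G.SBox) (hafAv : af ∈ G.Av sf)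
    (hafExit : ∃ t, 0 < G.δ sf af t ∧ t ∉ Y)
    (hbest : ∀ s ∈ Y, s ∈ G.SBox → ∀ a ∈ G.Av s, (∃ t, 0 < G.δ s a t ∧ t ∉ Y) →
      ∑ t, G.δ s a t * f t ≤ ∑ t, G.δ sf af t * f t) :
    ∀ s ∈ Y, V s ≤ ∑ t, G.δ sf af t * f t :=
  svi_best_exit_dominates_general G V hV Y hYsub hEC f hfV sf af hbest
end
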